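/- arXiv:math/0703864 — 2 statements merged into one kernel-verified Lean document; each statement's English description precedes it below -/
import Mathlib

section
/- Let N ≥ 1 be an integer. There exists a constant C = C(N) > 0 such that for all integers k ≥ 0, 1 ≤ l ≤ N and 0 ≤ j ≤ k, setting n = Nk + l, n₁ = Nj + l − 1 and n₂ = N(k − j), one has binom(k, j) ≤ C · (n^n / (n₁^{n₁} · n₂^{n₂}))^{1/N} (with the convention 0^0 = 1). -/
open Real

lemma aux_super (a b c d : ℕ) : a.choose c * b.choose d ≤ (a + b).choose (c + d) := by
  rw [Nat.add_choose_eq]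
  exact Finset.single_le_sum (f := fun ij : ℕ × ℕ => a.choose ij.1 * b.choose ij.2)
    (fun i _ => Nat.zero_le _) (show (c, d) ∈ Finset.HasAntidiagonal.antidiagonal (c + d) by simp)

lemma aux_pow (k j : ℕ) : ∀ N : ℕ, (k.choose j) ^ N ≤ (N * k).choose (N * j)
  | 0 => by simp
  | (N + 1) => by
    calc (k.choose j) ^ (N + 1) = (k.choose j) ^ N * k.choose j := pow_succ _ _
      _ ≤ (N * k).choose (N * j) * k.choose j :=
          Nat.mul_le_mul_right _ (aux_pow k j N)
      _ ≤ (N * k + k).choose (N * j + j) := aux_super _ _ _ _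
      _ = ((N + 1) * k).choose ((N + 1) * j) := by ring_nf

lemma aux_shift (m r : ℕ) : ∀ t : ℕ, m.choose r ≤ (m + t).choose (r + t)
  | 0 => le_refl _
  | (t + 1) => by
    calc m.choose r ≤ (m + t).choose (r + t) := aux_shift m r t
      _ ≤ (m + t).choose (r + t) + (m + t).choose (r + t + 1) := Nat.le_add_right _ _
      _ = (m + t + 1).choose (r + t + 1) := (Nat.choose_succ_succ _ _).symm

lemma aux_binpow (a b : ℕ) : (a + b).choose a * (a ^ a * b ^ b) ≤ (a + b) ^ (a + b) := by
  rw [add_pow]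
  calc (a + b).choose a * (a ^ a * b ^ b)
      = a ^ a * b ^ (a + b - a) * (a + b).choose a := by
        rw [Nat.add_sub_cancel_left]; ring
    _ ≤ ∑ i ∈ Finset.range (a + b + 1), a ^ i * b ^ (a + b - i) * (a + b).choose i :=
        Finset.single_le_sum (f := fun i => a ^ i * b ^ (a + b - i) * (a + b).choose i)
          (fun i _ => Nat.zero_le _)
          (Finset.mem_range.mpr (by omega))

lemma aux_mono (m : ℕ) : m ^ m ≤ (m + 1) ^ (m + 1) :=
  le_trans (Nat.pow_le_pow_left (Nat.le_succ m) m)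
    (Nat.pow_le_pow_right (Nat.succ_pos m) (Nat.le_succ m))

lemma aux_nat (N k l j : ℕ) (hl : 1 ≤ l) (hj : j ≤ k) :
    (k.choose j) ^ N * ((N * j + l - 1) ^ (N * j + l - 1) * (N * (k - j)) ^ (N * (k - j)))
      ≤ (N * k + l) ^ (N * k + l) := by
  set a := N * j + l - 1 with ha
  set b := N * (k - j) with hb
  have hab : a + b = N * k + (l - 1) := by
    have : N * j + N * (k - j) = N * k := by
      rw [← Nat.mul_add, Nat.add_sub_cancel' hj]
    omega
  have h1 : (k.choose j) ^ N ≤ (a + b).choose a := by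
    calc (k.choose j) ^ N ≤ (N * k).choose (N * j) := aux_pow k j N
      _ ≤ (N * k + (l - 1)).choose (N * j + (l - 1)) := aux_shift _ _ _
      _ = (a + b).choose a := by rw [hab]; congr 1; omega
  calc (k.choose j) ^ N * (a ^ a * b ^ b)
      ≤ (a + b).choose a * (a ^ a * b ^ b) := Nat.mul_le_mul_right _ h1
    _ ≤ (a + b) ^ (a + b) := aux_binpow a b
    _ ≤ (a + b + 1) ^ (a + b + 1) := aux_mono _
    _ = (N * k + l) ^ (N * k + l) := by rw [hab]; congr 1 <;> omega

lemma aux_pow_pos (m : ℕ) : (0 : ℝ) < (m : ℝ) ^ m := by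
  rcases Nat.eq_zero_or_pos m with h | h
  · simp [h]
  · positivity

/-- Binomial coefficient bound via Stirling's formula:
`C(k,j) ≤ C (n^n / (n₁^{n₁} n₂^{n₂}))^{1/N}` where `n = Nk + l`, `n₁ = Nj + l - 1`,
`n₂ = N(k - j)`, for `k ≥ 0`, `1 ≤ l ≤ N`, `0 ≤ j ≤ k` (convention `0^0 = 1`). -/
theorem binom_bound (N : ℕ) (hN : 1 ≤ N) :
    ∃ C : ℝ, 0 < C ∧ ∀ k l j : ℕ, 1 ≤ l → l ≤ N → j ≤ k →
      (Nat.choose k j : ℝ) ≤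
        C * (((N * k + l : ℕ) : ℝ) ^ (N * k + l : ℕ) /
              (((N * j + l - 1 : ℕ) : ℝ) ^ (N * j + l - 1 : ℕ) *
               ((N * (k - j) : ℕ) : ℝ) ^ (N * (k - j) : ℕ))) ^ ((1 : ℝ) / N) := by
  refine ⟨1, one_pos, fun k l j hl _ hj => ?_⟩
  rw [one_mul]
  set c : ℝ := (Nat.choose k j : ℝ) with hc
  have hc0 : 0 ≤ c := Nat.cast_nonneg _
  set D : ℝ := ((N * j + l - 1 : ℕ) : ℝ) ^ (N * j + l - 1 : ℕ) *
      ((N * (k - j) : ℕ) : ℝ) ^ (N * (k - j) : ℕ) with hD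
  have hDpos : 0 < D := mul_pos (aux_pow_pos _) (aux_pow_pos _)
  have hnat := aux_nat N k l j hl hj
  have hreal : c ^ N ≤ ((N * k + l : ℕ) : ℝ) ^ (N * k + l : ℕ) / D := by
    rw [le_div_iff₀ hDpos]
    calc c ^ N * D
        = ((k.choose j ^ N * ((N * j + l - 1) ^ (N * j + l - 1) *
            (N * (k - j)) ^ (N * (k - j))) : ℕ) : ℝ) := by simp only [hc, hD]; push_cast; ring
      _ ≤ (((N * k + l) ^ (N * k + l) : ℕ) : ℝ) := Nat.cast_le.mpr hnat
      _ = _ := by push_cast; ring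
  have key : c = (c ^ N) ^ ((1 : ℝ) / N) := by
    rw [← Real.rpow_natCast c N, ← Real.rpow_mul hc0, mul_one_div, div_self
      (Nat.cast_ne_zero.mpr (by omega)), Real.rpow_one]
  rw [key]
  exact Real.rpow_le_rpow (pow_nonneg hc0 N) hreal (by positivity)
end

section
/- Let N ≥ 1 be an integer, γ ≥ 1, and let C ≥ 1, C₁ ≥ 1 be constants. Suppose F : ℕ → [0,∞) satisfies F(0) ≤ C and, for every n ≥ 1, F(n) ≤ C₁ n^{1/(Nγ)} F(n−1) + C₁ Σ_{n₁=0}^{n−1} (n^{n/N} / (n₁^{n₁/N} · (n−1−n₁)^{(n−1−n₁)/N})) F(n₁) F(n−1−n₁) (with the convention 0^0 = 1). Then there exists a constant C₂ > 0, depending only on N, γ, C and C₁, such that F(n) ≤ C₂^{n+1} n^{n/N} for every n ≥ 0 (with the convention n^{n/N} = 1 for n = 0). -/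
open Real Finset

lemma sum_inv_sq_le' (n : ℕ) :
    ∑ k ∈ Finset.range n, (1:ℝ)/(((k:ℝ)+1)^2) ≤ 2 - 2/((n:ℝ)+1) := by
  induction n with
  | zero => norm_num
  | succ n ih =>
    rw [Finset.sum_range_succ]
    have h1 : (0:ℝ) < (n:ℝ)+1 := by positivity
    have h2 : (0:ℝ) < (n:ℝ)+2 := by positivity
    have e : 2/((n:ℝ)+1) - 2/((n:ℝ)+2) = 2/(((n:ℝ)+1)*((n:ℝ)+2)) := by
      field_simp; ring
    have h : (1:ℝ)/(((n:ℝ)+1)^2) ≤ 2/((n:ℝ)+1) - 2/((n:ℝ)+2) := by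
      rw [e, div_le_div_iff₀ (by positivity) (by positivity)]
      nlinarith
    push_cast
    rw [show ((n:ℝ)+1+1) = (n:ℝ)+2 from by ring]
    linarith

lemma conv_sum_le (n : ℕ) :
    ∑ k ∈ Finset.range n, (1:ℝ)/((((k:ℝ)+1)^2) * (((n:ℝ)-(k:ℝ))^2))
      ≤ 16/(((n:ℝ)+1)^2) := by
  have hpt : ∀ k ∈ Finset.range n,
      (1:ℝ)/((((k:ℝ)+1)^2) * (((n:ℝ)-(k:ℝ))^2))
        ≤ 4/(((n:ℝ)+1)^2) * (1/(((k:ℝ)+1)^2) + 1/(((n:ℝ)-(k:ℝ))^2)) := by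
    intro k hk
    have hk' : k < n := Finset.mem_range.mp hk
    have ha : (1:ℝ) ≤ (k:ℝ)+1 := by push_cast; linarith [Nat.cast_nonneg (α := ℝ) k]
    have hb : (1:ℝ) ≤ (n:ℝ)-(k:ℝ) := by
      have : (k:ℝ)+1 ≤ (n:ℝ) := by exact_mod_cast Nat.succ_le_of_lt hk'
      linarith
    set a : ℝ := (k:ℝ)+1 with hadef
    set b : ℝ := (n:ℝ)-(k:ℝ) with hbdef
    have hab : (n:ℝ)+1 = a + b := by rw [hadef, hbdef]; ring
    have ha0 : (0:ℝ) < a := by linarith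
    have hb0 : (0:ℝ) < b := by linarith
    rw [hab]
    have e : 4/((a+b)^2) * (1/(a^2) + 1/(b^2)) = 4*(a^2+b^2)/((a+b)^2 * (a^2*b^2)) := by
      field_simp; ring
    rw [e, div_le_div_iff₀ (by positivity) (by positivity)]
    nlinarith [sq_nonneg (a-b), sq_nonneg (a*b), mul_pos ha0 hb0, sq_nonneg ((a-b)*(a*b))]
  have h1 : ∑ k ∈ Finset.range n, (1:ℝ)/((((k:ℝ)+1)^2) * (((n:ℝ)-(k:ℝ))^2))
      ≤ ∑ k ∈ Finset.range n,
          4/(((n:ℝ)+1)^2) * (1/(((k:ℝ)+1)^2) + 1/(((n:ℝ)-(k:ℝ))^2)) :=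
    Finset.sum_le_sum hpt
  have h2 : ∑ k ∈ Finset.range n, (1:ℝ)/(((n:ℝ)-(k:ℝ))^2)
      = ∑ k ∈ Finset.range n, (1:ℝ)/(((k:ℝ)+1)^2) := by
    conv_lhs => rw [← Finset.sum_range_reflect]
    apply Finset.sum_congr rfl
    intro k hk
    have hk' : k < n := Finset.mem_range.mp hk
    congr 1
    have hc : ((n - 1 - k : ℕ):ℝ) = (n:ℝ) - 1 - (k:ℝ) := by
      have h2 : k ≤ n - 1 := by omega
      have h1 : 1 ≤ n := by omega
      rw [Nat.cast_sub h2, Nat.cast_sub h1]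
      norm_num
    rw [hc]; ring
  have h3 : ∑ k ∈ Finset.range n, (1:ℝ)/(((k:ℝ)+1)^2) ≤ 2 := by
    have := sum_inv_sq_le' n
    have : 0 ≤ 2/((n:ℝ)+1) := by positivity
    linarith [sum_inv_sq_le' n]
  calc ∑ k ∈ Finset.range n, (1:ℝ)/((((k:ℝ)+1)^2) * (((n:ℝ)-(k:ℝ))^2))
      ≤ ∑ k ∈ Finset.range n,
          4/(((n:ℝ)+1)^2) * (1/(((k:ℝ)+1)^2) + 1/(((n:ℝ)-(k:ℝ))^2)) := h1
    _ = 4/(((n:ℝ)+1)^2) * (∑ k ∈ Finset.range n, (1:ℝ)/(((k:ℝ)+1)^2)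
          + ∑ k ∈ Finset.range n, (1:ℝ)/(((n:ℝ)-(k:ℝ))^2)) := by
        rw [← Finset.mul_sum, Finset.sum_add_distrib]
    _ ≤ 4/(((n:ℝ)+1)^2) * (2 + 2) := by
        apply mul_le_mul_of_nonneg_left _ (by positivity)
        rw [h2]; linarith
    _ = 16/(((n:ℝ)+1)^2) := by ring


lemma rpow_self_div_pos (N : ℕ) (k : ℕ) : 0 < (k:ℝ)^((k:ℝ)/N) := by
  cases k with
  | zero => norm_num
  | succ k =>
    apply Real.rpow_pos_of_pos
    positivity

/-- The fractional bootstrap recursion: if `F(0) ≤ C` and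
`F(n) ≤ C₁ n^{1/(Nγ)} F(n-1) + C₁ Σ_{n₁} (n^{n/N} / (n₁^{n₁/N} (n-1-n₁)^{(n-1-n₁)/N}))
F(n₁) F(n-1-n₁)`, then `F(n) ≤ C₂^{n+1} n^{n/N}` for a constant `C₂ = C₂(N,γ,C,C₁)`
(conventions `0^0 = 1`). -/
theorem bootstrap_recursion_bound (N : ℕ) (hN : 1 ≤ N) (γ : ℝ) (hγ : 1 ≤ γ)
    (C C₁ : ℝ) (hC : 1 ≤ C) (hC₁ : 1 ≤ C₁) (F : ℕ → ℝ)
    (hFnonneg : ∀ n : ℕ, 0 ≤ F n) (hF0 : F 0 ≤ C)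
    (hFrec : ∀ n : ℕ, 1 ≤ n →
      F n ≤ C₁ * (n : ℝ) ^ ((1 : ℝ) / (N * γ)) * F (n - 1) +
        C₁ * ∑ n₁ ∈ Finset.range n,
          ((n : ℝ) ^ ((n : ℝ) / N) /
            ((n₁ : ℝ) ^ ((n₁ : ℝ) / N) *
              ((n - 1 - n₁ : ℕ) : ℝ) ^ (((n - 1 - n₁ : ℕ) : ℝ) / N))) *
            F n₁ * F (n - 1 - n₁)) :
    ∃ C₂ : ℝ, 0 < C₂ ∧ ∀ n : ℕ, F n ≤ C₂ ^ (n + 1) * (n : ℝ) ^ ((n : ℝ) / N) := by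
  have hN0 : (0:ℝ) < N := by exact_mod_cast Nat.lt_of_lt_of_le Nat.zero_lt_one hN
  set B : ℝ := C₁ * (4 + 16 * C) with hBdef
  have hB1 : (1:ℝ) ≤ B := by nlinarith
  have hB0 : (0:ℝ) < B := by linarith
  have key : ∀ n : ℕ, F n ≤ C * B^n * (n:ℝ)^((n:ℝ)/N) / (((n:ℝ)+1)^2) := by
    intro n
    induction n using Nat.strong_induction_on with
    | _ n ih =>
      cases n with
      | zero =>
        simp only [Nat.cast_zero, zero_div, Real.rpow_zero, pow_zero, mul_one, one_mul,
          zero_add, one_pow, div_one]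
        exact hF0
      | succ m =>
        have hrec := hFrec (m+1) (by omega)
        simp only [Nat.add_sub_cancel] at hrec
        set x : ℝ := (m:ℝ) with hxdef
        have hx0 : (0:ℝ) ≤ x := Nat.cast_nonneg m
        have hcast1 : ((m+1:ℕ):ℝ) = x + 1 := by push_cast; ring
        -- the target rpow quantity
        set P : ℝ := (x+1)^((x+1)/N) with hPdef
        have hP0 : 0 < P := Real.rpow_pos_of_pos (by linarith) _
        -- combine exponents
        have hmul : (x+1)^((1:ℝ)/N) * (x+1)^(x/N) = P := by
          rw [hPdef, ← Real.rpow_add (by linarith)]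
          congr 1
          ring
        -- first term bound
        have hsq : ∀ a : ℝ, 0 ≤ a → a/((x+1)^2) ≤ 4*a/((x+2)^2) := by
          intro a ha
          rw [div_le_div_iff₀ (by positivity) (by positivity)]
          nlinarith [mul_nonneg ha (mul_nonneg hx0 hx0), mul_nonneg ha hx0]
        have hA : ((m+1:ℕ):ℝ)^((1:ℝ)/(N*γ)) ≤ (x+1)^((1:ℝ)/N) := by
          rw [hcast1]
          apply Real.rpow_le_rpow_of_exponent_le (by linarith)
          rw [div_le_div_iff₀ (by positivity) hN0]
          nlinarith
        have hFm : F m ≤ C * B^m * x^(x/N) / ((x+1)^2) := ih m (by omega)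
        have hx1 : x^(x/N) ≤ (x+1)^(x/N) :=
          Real.rpow_le_rpow hx0 (by linarith) (by positivity)
        have h1 : C₁ * ((m+1:ℕ):ℝ)^((1:ℝ)/(N*γ)) * F m
            ≤ 4 * (C₁ * C * B^m * P) / ((x+2)^2) := by
          calc C₁ * ((m+1:ℕ):ℝ)^((1:ℝ)/(N*γ)) * F m
              ≤ C₁ * (x+1)^((1:ℝ)/N) * F m := by
                apply mul_le_mul_of_nonneg_right _ (hFnonneg m)
                exact mul_le_mul_of_nonneg_left hA (by linarith)
            _ ≤ C₁ * (x+1)^((1:ℝ)/N) * (C * B^m * x^(x/N) / ((x+1)^2)) := by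
                apply mul_le_mul_of_nonneg_left hFm
                positivity
            _ ≤ C₁ * (x+1)^((1:ℝ)/N) * (C * B^m * (x+1)^(x/N) / ((x+1)^2)) := by
                gcongr
            _ = (C₁ * C * B^m) * ((x+1)^((1:ℝ)/N) * (x+1)^(x/N)) / ((x+1)^2) := by
                ring
            _ = (C₁ * C * B^m * P) / ((x+1)^2) := by rw [hmul]
            _ ≤ 4 * (C₁ * C * B^m * P) / ((x+2)^2) := by
                have := hsq (C₁ * C * B^m * P) (by positivity)
                linarith [this]
        -- second term: pointwise bound on summands
        have hpt : ∀ n₁ ∈ Finset.range (m+1),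
            (((m+1:ℕ):ℝ) ^ (((m+1:ℕ):ℝ) / N) /
              ((n₁ : ℝ) ^ ((n₁ : ℝ) / N) *
                ((m - n₁ : ℕ) : ℝ) ^ (((m - n₁ : ℕ) : ℝ) / N))) *
              F n₁ * F (m - n₁)
            ≤ (C^2 * B^m * P) *
              (1/((((n₁:ℝ)+1)^2) * (((x+1) - (n₁:ℝ))^2))) := by
          intro n₁ hn₁
          have hn₁' : n₁ ≤ m := by
            have := Finset.mem_range.mp hn₁; omega
          set j : ℕ := m - n₁ with hjdef
          have hj' : (j:ℝ) = x - n₁ := by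
            rw [hjdef, Nat.cast_sub hn₁']
          have ha0 : 0 < (n₁:ℝ)^((n₁:ℝ)/N) := rpow_self_div_pos N n₁
          have hb0 : 0 < (j:ℝ)^((j:ℝ)/N) := rpow_self_div_pos N j
          have hFa : F n₁ ≤ C * B^n₁ * (n₁:ℝ)^((n₁:ℝ)/N) / (((n₁:ℝ)+1)^2) :=
            ih n₁ (by omega)
          have hFb : F j ≤ C * B^j * (j:ℝ)^((j:ℝ)/N) / (((j:ℝ)+1)^2) :=
            ih j (by omega)
          have hQ : ((m+1:ℕ):ℝ) ^ (((m+1:ℕ):ℝ) / N) = P := by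
            rw [hcast1, hPdef]
          rw [hQ]
          have hBpow : B^n₁ * B^j = B^m := by
            rw [← pow_add]; congr 1; omega
          calc (P / ((n₁:ℝ)^((n₁:ℝ)/N) * (j:ℝ)^((j:ℝ)/N))) * F n₁ * F j
              ≤ (P / ((n₁:ℝ)^((n₁:ℝ)/N) * (j:ℝ)^((j:ℝ)/N))) *
                  (C * B^n₁ * (n₁:ℝ)^((n₁:ℝ)/N) / (((n₁:ℝ)+1)^2)) *
                  (C * B^j * (j:ℝ)^((j:ℝ)/N) / (((j:ℝ)+1)^2)) := by
                apply mul_le_mul _ hFb (hFnonneg j) _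
                · exact mul_le_mul_of_nonneg_left hFa (by positivity)
                · positivity
            _ = (C^2 * (B^n₁ * B^j) * P) *
                  (1/((((n₁:ℝ)+1)^2) * (((j:ℝ)+1)^2))) := by
                field_simp
            _ = (C^2 * B^m * P) *
                  (1/((((n₁:ℝ)+1)^2) * (((x+1) - (n₁:ℝ))^2))) := by
                rw [hBpow, hj']
                ring_nf
        have hsum : ∑ n₁ ∈ Finset.range (m+1),
            (((m+1:ℕ):ℝ) ^ (((m+1:ℕ):ℝ) / N) /
              ((n₁ : ℝ) ^ ((n₁ : ℝ) / N) *
                ((m - n₁ : ℕ) : ℝ) ^ (((m - n₁ : ℕ) : ℝ) / N))) *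
              F n₁ * F (m - n₁)
            ≤ (C^2 * B^m * P) * (16/((x+2)^2)) := by
          calc _ ≤ ∑ n₁ ∈ Finset.range (m+1), (C^2 * B^m * P) *
                (1/((((n₁:ℝ)+1)^2) * (((x+1) - (n₁:ℝ))^2))) :=
              Finset.sum_le_sum hpt
            _ = (C^2 * B^m * P) * ∑ n₁ ∈ Finset.range (m+1),
                (1:ℝ)/((((n₁:ℝ)+1)^2) * ((((m+1:ℕ):ℝ) - (n₁:ℝ))^2)) := by
                rw [← Finset.mul_sum, hcast1]
            _ ≤ (C^2 * B^m * P) * (16/((((m+1:ℕ):ℝ)+1)^2)) := by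
                apply mul_le_mul_of_nonneg_left (conv_sum_le (m+1)) (by positivity)
            _ = (C^2 * B^m * P) * (16/((x+2)^2)) := by
                rw [hcast1]; ring_nf
        have h2 : C₁ * (∑ n₁ ∈ Finset.range (m+1),
            (((m+1:ℕ):ℝ) ^ (((m+1:ℕ):ℝ) / N) /
              ((n₁ : ℝ) ^ ((n₁ : ℝ) / N) *
                ((m - n₁ : ℕ) : ℝ) ^ (((m - n₁ : ℕ) : ℝ) / N))) *
              F n₁ * F (m - n₁))
            ≤ C₁ * ((C^2 * B^m * P) * (16/((x+2)^2))) :=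
          mul_le_mul_of_nonneg_left hsum (by linarith)
        -- assemble
        have hgoal : ((m+1:ℕ):ℝ) ^ (((m+1:ℕ):ℝ)/N) = P := by rw [hcast1, hPdef]
        calc F (m+1) ≤ _ := hrec
          _ ≤ 4 * (C₁ * C * B^m * P) / ((x+2)^2)
              + C₁ * ((C^2 * B^m * P) * (16/((x+2)^2))) := add_le_add h1 h2
          _ = C * B^(m+1) * P / ((x+2)^2) := by
              rw [pow_succ, hBdef]
              field_simp
              ring
          _ = C * B^(m+1) * ((m+1:ℕ):ℝ) ^ (((m+1:ℕ):ℝ)/N) / ((((m+1:ℕ):ℝ))+1)^2 := by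
              rw [hgoal, hcast1]; ring_nf
  refine ⟨C * B, by positivity, fun n => ?_⟩
  have h := key n
  have hr0 : 0 ≤ (n:ℝ)^((n:ℝ)/N) := Real.rpow_nonneg (Nat.cast_nonneg n) _
  have hd : C * B^n * (n:ℝ)^((n:ℝ)/N) / (((n:ℝ)+1)^2) ≤ C * B^n * (n:ℝ)^((n:ℝ)/N) := by
    apply div_le_self (by positivity)
    nlinarith [Nat.cast_nonneg (α := ℝ) n]
  have hCB : C * B^n ≤ (C*B)^(n+1) := by
    have h1 : C ≤ C^(n+1) := le_self_pow₀ (by linarith) (by omega)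
    have h2 : B^n ≤ B^(n+1) := pow_le_pow_right₀ hB1 (Nat.le_succ n)
    calc C * B^n ≤ C^(n+1) * B^(n+1) :=
          mul_le_mul h1 h2 (by positivity) (by positivity)
      _ = (C*B)^(n+1) := (mul_pow C B (n+1)).symm
  calc F n ≤ C * B^n * (n:ℝ)^((n:ℝ)/N) / (((n:ℝ)+1)^2) := h
    _ ≤ C * B^n * (n:ℝ)^((n:ℝ)/N) := hd
    _ ≤ (C*B)^(n+1) * (n:ℝ)^((n:ℝ)/N) := mul_le_mul_of_nonneg_right hCB hr0
end
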